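/- arXiv:2511.11602 — 2 statements merged into one kernel-verified Lean document; each statement's English description precedes it below -/
import Mathlib

section
/- Let $\rho : \mathbb{N} \to \mathbb{R}$ satisfy $\rho(t+1) = \rho(t) + \eta (u + \upsilon(t) - \rho(t))$ where $\eta \in (0,1)$, $u \in \mathbb{R}$, and $|\upsilon(t)| \leq \bar\upsilon$ for all $t$. Set $X = 1 - \eta$, $Y = 1 + \eta$, and $\Delta u = u - \rho(0)$. Then for all $t \geq 1$: $\bar\upsilon - X^t \Delta u - Y^t \bar\upsilon \leq \rho(t) - u \leq -\bar\upsilon - X^t \Delta u + Y^t \bar\upsilon$. -/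
theorem stmt_2 (ρ υ : ℕ → ℝ) (η u ubar : ℝ) (hη : η ∈ Set.Ioo (0:ℝ) 1)
    (hυ : ∀ t, |υ t| ≤ ubar)
    (hrec : ∀ t, ρ (t + 1) = ρ t + η * (u + υ t - ρ t)) :
    ∀ t, 1 ≤ t →
      ubar - (1 - η) ^ t * (u - ρ 0) - (1 + η) ^ t * ubar ≤ ρ t - u ∧
      ρ t - u ≤ -ubar - (1 - η) ^ t * (u - ρ 0) + (1 + η) ^ t * ubar := by
  obtain ⟨hη0, hη1⟩ := hη
  have hubar : 0 ≤ ubar := le_trans (abs_nonneg _) (hυ 0)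
  have hX0 : (0:ℝ) ≤ 1 - η := by linarith
  -- key bound by induction
  have key : ∀ t, |ρ t - u + (1 - η) ^ t * (u - ρ 0)| ≤ (1 - (1 - η) ^ t) * ubar := by
    intro t
    induction t with
    | zero => simp
    | succ n ih =>
      have h1 : ρ (n+1) - u + (1 - η) ^ (n+1) * (u - ρ 0)
          = (1 - η) * (ρ n - u + (1 - η) ^ n * (u - ρ 0)) + η * υ n := by
        rw [hrec n]; ring
      rw [h1]
      calc |(1 - η) * (ρ n - u + (1 - η) ^ n * (u - ρ 0)) + η * υ n|
          ≤ |(1 - η) * (ρ n - u + (1 - η) ^ n * (u - ρ 0))| + |η * υ n| := abs_add_le _ _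
        _ = (1 - η) * |ρ n - u + (1 - η) ^ n * (u - ρ 0)| + η * |υ n| := by
            rw [abs_mul, abs_mul, abs_of_nonneg hX0, abs_of_nonneg hη0.le]
        _ ≤ (1 - η) * ((1 - (1 - η) ^ n) * ubar) + η * ubar := by
            gcongr <;> first | exact ih | exact hυ n
        _ = (1 - (1 - η) ^ (n+1)) * ubar := by ring
  -- X^t + Y^t ≥ 2
  have sum2 : ∀ t, (2:ℝ) ≤ (1 - η) ^ t + (1 + η) ^ t := by
    intro t
    induction t with
    | zero => norm_num
    | succ n ih =>
      have hba : (1 - η) ^ n ≤ (1 + η) ^ n := by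
        apply pow_le_pow_left₀ hX0; linarith
      have ha : (0:ℝ) ≤ (1 - η) ^ n := pow_nonneg hX0 n
      calc (2:ℝ) ≤ (1 - η) ^ n + (1 + η) ^ n := ih
        _ ≤ (1 - η) ^ (n+1) + (1 + η) ^ (n+1) := by
            rw [pow_succ, pow_succ]; nlinarith
  intro t ht
  have hk := abs_le.mp (key t)
  have hs := sum2 t
  constructor
  · nlinarith [hk.1, mul_nonneg hubar (sub_nonneg.mpr (by linarith : (2:ℝ) - (1-η)^t ≤ (1+η)^t))]
  · nlinarith [hk.2]
end

section
/- Let $P, Q$ be Markov kernels, $\varphi \in (0,1)$, $P_\lambda = (1-\varphi)P + \varphi Q$, $R = \varphi \sum_{t=0}^\infty (1-\varphi)^t P^t$, and $P^L = QR$. If $\mu$ is an invariant probability measure of $P_\lambda$ (i.e., $\mu P_\lambda = \mu$), then $\mu$ is also an invariant probability measure of $P^L$ (i.e., $\mu P^L = \mu$). -/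
set_option maxHeartbeats 1000000
set_option synthInstance.maxHeartbeats 400000


/-- Markov kernels modeled as norm-one-bounded (row-stochastic) operators; an invariant
probability measure is modeled as a continuous functional `μ` with `μ ∘ P_λ = μ`. -/
theorem stmt_13 {E : Type*} [NormedAddCommGroup E] [NormedSpace ℝ E] [CompleteSpace E]
    (P Q : E →L[ℝ] E) (hP : ‖P‖ ≤ 1) (hQ : ‖Q‖ ≤ 1)
    (φ : ℝ) (hφ : φ ∈ Set.Ioo (0:ℝ) 1)
    (R : E →L[ℝ] E) (hR : R = φ • ∑' t : ℕ, (1 - φ) ^ t • P ^ t)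
    (PL : E →L[ℝ] E) (hPL : PL = Q * R)
    (Pl : E →L[ℝ] E) (hPl : Pl = (1 - φ) • P + φ • Q)
    (μ : E →L[ℝ] ℝ) (hinv : μ.comp Pl = μ) :
    μ.comp PL = μ := by
  obtain ⟨hφ0, hφ1⟩ := hφ
  set r : ℝ := 1 - φ with hr
  have hr0 : 0 ≤ r := by simp [hr]; linarith
  have hr1 : r < 1 := by simp [hr]; linarith
  have hPt : ∀ t : ℕ, ‖P ^ t‖ ≤ 1 := by
    intro t
    induction t with
    | zero => simpa [ContinuousLinearMap.one_def] using ContinuousLinearMap.norm_id_le (E := E)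
    | succ n ih =>
      calc ‖P ^ (n + 1)‖ = ‖P * P ^ n‖ := by rw [pow_succ']
        _ ≤ ‖P‖ * ‖P ^ n‖ := norm_mul_le _ _
        _ ≤ 1 * 1 := mul_le_mul hP ih (norm_nonneg _) (by norm_num)
        _ = 1 := by ring
  have hsum : Summable (fun t : ℕ => r ^ t • P ^ t) := by
    apply Summable.of_norm_bounded (summable_geometric_of_lt_one hr0 hr1)
    intro t
    calc ‖r ^ t • P ^ t‖ ≤ ‖(r ^ t : ℝ)‖ * ‖P ^ t‖ := norm_smul_le (r ^ t) (P ^ t)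
      _ = r ^ t * ‖P ^ t‖ := by
          rw [Real.norm_eq_abs, abs_pow, abs_of_nonneg hr0]
      _ ≤ r ^ t * 1 := mul_le_mul_of_nonneg_left (hPt t) (pow_nonneg hr0 t)
      _ = r ^ t := by ring
  set S : E →L[ℝ] E := ∑' t : ℕ, r ^ t • P ^ t with hS
  have key : r • (P * S) = S - 1 := by
    have h1 : P * S = ∑' t : ℕ, r ^ t • P ^ (t + 1) := by
      rw [hS, ← hsum.tsum_mul_left P]
      congr 1
      funext t
      rw [mul_smul_comm, pow_succ']
    have h2 : r • (P * S) = ∑' t : ℕ, r ^ (t + 1) • P ^ (t + 1) := by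
      rw [h1, ← tsum_const_smul'' r]
      congr 1
      funext t
      rw [smul_smul, pow_succ' r t]
    have h3 : S = (1 : E →L[ℝ] E) + ∑' t : ℕ, r ^ (t + 1) • P ^ (t + 1) := by
      rw [hS, Summable.tsum_eq_zero_add hsum]
      simp
    rw [h2, h3]
    abel
  have ha : (r • P) * (φ • S) = φ • (S - 1 : E →L[ℝ] E) := by
    rw [smul_mul_assoc, mul_smul_comm, smul_comm r φ, key]
  have hb : (φ • Q) * (φ • S) = φ • PL := by
    rw [hPL, hR, smul_mul_assoc, mul_smul_comm]
  have hkey2 : Pl * R = R - φ • 1 + φ • PL := by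
    rw [hPl, hR, add_mul, ha, hb, ← hR]
    rw [hR, smul_sub]
  have hmc : μ.comp (Pl * R) = μ.comp R := by
    show μ.comp (Pl.comp R) = μ.comp R
    rw [← ContinuousLinearMap.comp_assoc, hinv]
  rw [hkey2] at hmc
  have hexp : μ.comp (R - φ • 1 + φ • PL) = μ.comp R - φ • μ + φ • μ.comp PL := by
    ext x
    simp
  rw [hexp] at hmc
  have h0 := sub_eq_zero_of_eq hmc.symm
  have h1 : φ • μ - φ • μ.comp PL = 0 := by rw [← h0]; abel
  exact (smul_right_injective _ (ne_of_gt hφ0) (sub_eq_zero.mp h1)).symm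
end
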